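/- arXiv:2004.10175 — 2 statements merged into one kernel-verified Lean document; each statement's English description precedes it below -/
import Mathlib

section
/- Star-shapedness of spherical slices (Corollary 5.6, first part): Let n ≥ 2 and let Ω ⊆ ℝⁿ be an open bounded convex set with 0 ∈ closure(Ω), satisfying the cap hypothesis with unit vector e and radius r* ∈ (0, π/2). Then there exists a constant c > 0, depending only on n and r*, such that for every t ∈ S_c and every s ∈ [t/2, 2t] ∩ (0,1), the slice V_s is star-shaped on the sphere with respect to e: for every p ∈ V_s and all a, b ≥ 0 with a·e + b·p ≠ 0, the point (a·e + b·p)/‖a·e + b·p‖ belongs to V_s. -/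
open Set
open scoped RealInnerProductSpace

noncomputable section

/-- A unit vector `ν` is an outer supporting normal of `Ω` at `y` if
`⟨ν, z − y⟩ ≤ 0` for all `z ∈ Ω`. -/
def IsOuterNormal {E : Type*} [NormedAddCommGroup E] [InnerProductSpace ℝ E]
    (Ω : Set E) (y ν : E) : Prop :=
  ‖ν‖ = 1 ∧ ∀ z ∈ Ω, ⟪ν, z - y⟫ ≤ 0

/-- `M_x(t) = sup {⟨ν, y − x⟩ : y ∈ ∂Ω, 0 < ‖y − x‖ ≤ t, ν an outer supporting normal at y}`
(`sSup ∅ = 0` in `ℝ`, so the empty case gives `0`). -/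
noncomputable def Mfun {E : Type*} [NormedAddCommGroup E] [InnerProductSpace ℝ E]
    (Ω : Set E) (x : E) (t : ℝ) : ℝ :=
  sSup {m : ℝ | ∃ y ν : E, y ∈ frontier Ω ∧ 0 < ‖y - x‖ ∧ ‖y - x‖ ≤ t ∧
    IsOuterNormal Ω y ν ∧ m = ⟪ν, y - x⟫}

/-- The rescaled spherical slice `V_t = {ω ∈ 𝕊^{n−1} : t·ω ∈ Ω}`. -/
def Vslice {E : Type*} [NormedAddCommGroup E] [InnerProductSpace ℝ E]
    (Ω : Set E) (t : ℝ) : Set E :=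
  {ω | ‖ω‖ = 1 ∧ t • ω ∈ Ω}

/-- `S_c = {t ∈ (0,1) : M₀(s) ≤ c·s for all s ∈ [t/4, 4t]}`. -/
def Sset {E : Type*} [NormedAddCommGroup E] [InnerProductSpace ℝ E]
    (Ω : Set E) (c : ℝ) : Set ℝ :=
  {t | t ∈ Ioo (0:ℝ) 1 ∧ ∀ s ∈ Icc (t/4) (4*t), Mfun Ω 0 s ≤ c * s}

/-- Cap hypothesis: the slice `V₁` contains the geodesic cap of radius `rstar` around
the unit vector `e`. -/
def CapHyp {E : Type*} [NormedAddCommGroup E] [InnerProductSpace ℝ E]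
    (Ω : Set E) (e : E) (rstar : ℝ) : Prop :=
  ‖e‖ = 1 ∧ ∀ ω : E, ‖ω‖ = 1 → Real.cos rstar < ⟪ω, e⟫ → ω ∈ Vslice Ω 1


/-!
If `q` lies on the arc from `e` to `p` but `s • q ∉ Ω`, the chord from `s • q` to `s • p` crosses
`∂Ω` at a point `y = A • e + B • p` with `A > 0` and `‖y‖ ≤ s`, and a supporting normal `ν` there
satisfies `⟪ν, y⟫ ≤ M₀(s) ≤ c s`. As `Ω` contains `s` times the cap around `e`, this forces
`⟪ν, e⟫ ≤ -2c`, which in turn pushes `⟪ν, y⟫` up to at least `2 c s`.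
-/

open Real

theorem le_neg_quarter_of_cos_mul_add_sin_mul_le {S C μ ρ : ℝ} (hS : 0 < S) (hS1 : S ≤ 1)
    (hC : 0 ≤ C) (hC1 : C ≤ 1) (hρ : 0 ≤ ρ) (hμρ : μ ^ 2 + ρ ^ 2 = 1) (he : μ ≤ S / 8)
    (hω : C * μ + S * ρ ≤ S / 8) : μ ≤ -(S / 4) := by
  by_contra! h
  have hCμ : -(S / 4) < C * μ := by
    rcases le_or_gt 0 μ with hμ | hμ <;> nlinarith
  have hρ : ρ < 3 / 8 := by nlinarith
  nlinarith

section

variable {E : Type*} [NormedAddCommGroup E] [InnerProductSpace ℝ E]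

theorem inner_le_neg_of_forall_cap_inner_le {e ν : E} (he : ‖e‖ = 1) (hν : ‖ν‖ = 1) {r : ℝ}
    (hr : r ∈ Ioo 0 π)
    (h : ∀ ω : E, ‖ω‖ = 1 → cos r < ⟪ω, e⟫ → ⟪ν, ω⟫ ≤ sin (r / 2) / 8) :
    ⟪ν, e⟫ ≤ -(sin (r / 2) / 4) := by
  have hS : 0 < sin (r / 2) := sin_pos_of_mem_Ioo ⟨half_pos hr.1, (half_lt_self hr.1).trans hr.2⟩
  obtain ⟨hr0, hrπ⟩ := hr
  have hC : 0 < cos (r / 2) := cos_pos_of_mem_Ioo ⟨by linarith, by linarith⟩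
  have hee : ⟪e, e⟫ = 1 := by rw [real_inner_self_eq_norm_sq, he, one_pow]
  set μ := ⟪ν, e⟫
  set w := ν - μ • e
  have hwe : ⟪w, e⟫ = 0 := by simp only [w, inner_sub_left, real_inner_smul_left, hee]; ring
  have hμw : μ ^ 2 + ‖w‖ ^ 2 = 1 := by
    have := norm_add_sq_real (μ • e) w
    rwa [add_sub_cancel, hν, real_inner_smul_left, real_inner_comm, hwe, norm_smul, he,
      Real.norm_eq_abs, mul_one, sq_abs, mul_zero, mul_zero, add_zero, one_pow, eq_comm] at this
  have hcos : cos r < 1 := by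
    simpa using cos_lt_cos_of_nonneg_of_le_pi le_rfl hrπ.le hr0
  have hμe : μ ≤ sin (r / 2) / 8 := h e he (by rwa [hee])
  rcases eq_or_ne w 0 with hw | hw
  · rw [hw, norm_zero] at hμw
    nlinarith [sin_le_one (r / 2)]
  set u := ‖w‖⁻¹ • w
  have hu : ‖u‖ = 1 := norm_smul_inv_norm hw
  have hue : ⟪u, e⟫ = 0 := by rw [real_inner_smul_left, hwe, mul_zero]
  have hνu : ⟪ν, u⟫ = ‖w‖ := by
    have hνw : ν = μ • e + w := by simp [w]
    rw [hνw, real_inner_smul_right, inner_add_left, real_inner_smul_left, real_inner_comm, hwe,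
      real_inner_self_eq_norm_sq]
    field_simp [norm_ne_zero_iff.mpr hw]
    ring
  have hω : ‖cos (r / 2) • e + sin (r / 2) • u‖ = 1 := by
    have := norm_add_sq_real (cos (r / 2) • e) (sin (r / 2) • u)
    rw [real_inner_smul_left, real_inner_smul_right, real_inner_comm, hue, norm_smul, norm_smul,
      he, hu, Real.norm_eq_abs, Real.norm_eq_abs, mul_one, mul_one, sq_abs,
      sq_abs, mul_zero, mul_zero, mul_zero, add_zero, cos_sq_add_sin_sq] at this
    exact (pow_eq_one_iff_of_nonneg (norm_nonneg _) two_ne_zero).mp this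
  have hωe : ⟪cos (r / 2) • e + sin (r / 2) • u, e⟫ = cos (r / 2) := by
    rw [inner_add_left, real_inner_smul_left, real_inner_smul_left, hee, hue]; ring
  have hνω := h _ hω (by
    rw [hωe]; exact cos_lt_cos_of_nonneg_of_le_pi (by linarith) hrπ.le (by linarith))
  rw [inner_add_right, real_inner_smul_right, real_inner_smul_right, hνu] at hνω
  exact le_neg_quarter_of_cos_mul_add_sin_mul_le hS (sin_le_one _) hC.le (cos_le_one _)
    (norm_nonneg w) hμw hμe (by linarith)

theorem smul_mem_of_zero_mem_closure {Ω : Set E} (hΩo : IsOpen Ω) (hΩc : Convex ℝ Ω)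
    (h0 : (0 : E) ∈ closure Ω) {x : E} (hx : x ∈ Ω) {l : ℝ} (hl0 : 0 < l) (hl1 : l ≤ 1) :
    l • x ∈ Ω := by
  have h := hΩc.combo_interior_closure_mem_interior (hΩo.interior_eq ▸ hx) h0 hl0
    (sub_nonneg.mpr hl1) (add_sub_cancel l 1)
  rwa [hΩo.interior_eq, smul_zero, add_zero] at h

theorem Vslice_subset_Vslice {Ω : Set E} (hΩo : IsOpen Ω) (hΩc : Convex ℝ Ω)
    (h0 : (0 : E) ∈ closure Ω) {s t : ℝ} (hs : 0 < s) (hst : s ≤ t) :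
    Vslice Ω t ⊆ Vslice Ω s := by
  rintro ω ⟨hω, hωΩ⟩
  have ht : 0 < t := hs.trans_le hst
  refine ⟨hω, ?_⟩
  have := smul_mem_of_zero_mem_closure hΩo hΩc h0 hωΩ (div_pos hs ht) ((div_le_one ht).mpr hst)
  rwa [smul_smul, div_mul_cancel₀ s ht.ne'] at this

theorem exists_isOuterNormal_of_mem_frontier [CompleteSpace E] {Ω : Set E} (hΩo : IsOpen Ω)
    (hΩc : Convex ℝ Ω) {y : E} (hy : y ∈ frontier Ω) : ∃ ν, IsOuterNormal Ω y ν := by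
  rw [hΩo.frontier_eq] at hy
  obtain ⟨z₀, hz₀⟩ := closure_nonempty_iff.mp ⟨y, hy.1⟩
  obtain ⟨f, hf⟩ := geometric_hahn_banach_open_point hΩc hΩo hy.2
  set v := (InnerProductSpace.toDual ℝ E).symm f
  have hv : ∀ x, ⟪v, x⟫ = f x := fun x => InnerProductSpace.toDual_symm_apply
  have hv0 : v ≠ 0 := by
    rintro h
    have := hf z₀ hz₀
    rw [← hv, ← hv, h, inner_zero_left, inner_zero_left] at this
    exact this.false
  refine ⟨‖v‖⁻¹ • v, norm_smul_inv_norm hv0, fun z hz => ?_⟩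
  rw [real_inner_smul_left, inner_sub_right, hv, hv]
  exact mul_nonpos_of_nonneg_of_nonpos (inv_nonneg.mpr (norm_nonneg v))
    (sub_nonpos.mpr (hf z hz).le)

theorem IsOuterNormal.inner_sub_nonpos_of_mem_closure {Ω : Set E} {y ν : E}
    (hν : IsOuterNormal Ω y ν) {z : E} (hz : z ∈ closure Ω) : ⟪ν, z - y⟫ ≤ 0 :=
  closure_minimal (t := {z | ⟪ν, z - y⟫ ≤ 0}) hν.2
    (isClosed_le (by fun_prop) continuous_const) hz

theorem inner_le_Mfun {Ω : Set E} {y ν : E} {s : ℝ} (hy : y ∈ frontier Ω) (hy0 : y ≠ 0)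
    (hys : ‖y‖ ≤ s) (hν : IsOuterNormal Ω y ν) : ⟪ν, y⟫ ≤ Mfun Ω 0 s := by
  refine le_csSup ⟨s, ?_⟩ ⟨y, ν, hy, by simpa using hy0, by simpa using hys, hν, by simp⟩
  rintro m ⟨y', ν', -, -, hy's, ⟨hν', -⟩, rfl⟩
  calc ⟪ν', y' - 0⟫ ≤ ‖ν'‖ * ‖y' - 0‖ := real_inner_le_norm _ _
    _ ≤ s := by rwa [hν', one_mul]

/-- The `e`-part of `⟪ν, y⟫` is at most `-δ A`, the `p`-part at most `B ⟪ν, y⟫ / s`, and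
`B ≤ s + A` because `‖y‖ ≤ s`. -/
theorem IsOuterNormal.mul_le_inner {Ω : Set E} {y ν e p : E} {A B s δ : ℝ}
    (hν : IsOuterNormal Ω y ν) (h0 : (0 : E) ∈ closure Ω) (he : ‖e‖ = 1) (hp : ‖p‖ = 1)
    (hpΩ : s • p ∈ Ω) (hνe : ⟪ν, e⟫ ≤ -δ) (hA : 0 < A) (hB : 0 ≤ B) (hy : y = A • e + B • p)
    (hys : ‖y‖ ≤ s) : δ * s ≤ ⟪ν, y⟫ := by
  have hκ : 0 ≤ ⟪ν, y⟫ := by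
    simpa [inner_neg_right] using hν.inner_sub_nonpos_of_mem_closure h0
  have hνp : s * ⟪ν, p⟫ ≤ ⟪ν, y⟫ := by
    simpa [inner_sub_right, real_inner_smul_right] using hν.2 _ hpΩ
  have hBA : B - A ≤ s := by
    have := norm_sub_norm_le (B • p) (-(A • e))
    rw [sub_neg_eq_add, add_comm, ← hy, norm_neg, norm_smul, norm_smul, hp, he,
      Real.norm_of_nonneg hB, Real.norm_of_nonneg hA.le, mul_one, mul_one] at this
    linarith
  have hs : 0 ≤ s := (norm_nonneg y).trans hys
  have hνy : ⟪ν, y⟫ = A * ⟪ν, e⟫ + B * ⟪ν, p⟫ := by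
    rw [hy, inner_add_right, real_inner_smul_right, real_inner_smul_right]
  nlinarith [mul_le_mul_of_nonneg_left hνe (mul_nonneg hs hA.le), mul_le_mul_of_nonneg_left hνp hB,
    mul_le_mul_of_nonneg_right hBA hκ]

theorem normalize_add_mem_Vslice [CompleteSpace E] {Ω : Set E} (hΩo : IsOpen Ω)
    (hΩc : Convex ℝ Ω) (h0 : (0 : E) ∈ closure Ω) {e p : E} {r s a b : ℝ} (hr : r ∈ Ioo 0 π)
    (hs : 0 < s) (he : ‖e‖ = 1) (hcap : ∀ ω : E, ‖ω‖ = 1 → cos r < ⟪ω, e⟫ → ω ∈ Vslice Ω s)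
    (hM : Mfun Ω 0 s ≤ sin (r / 2) / 8 * s) (hp : p ∈ Vslice Ω s) (ha : 0 ≤ a) (hb : 0 ≤ b)
    (hab : a • e + b • p ≠ 0) :
    ‖a • e + b • p‖⁻¹ • (a • e + b • p) ∈ Vslice Ω s := by
  obtain ⟨hp1, hpΩ⟩ := hp
  refine ⟨norm_smul_inv_norm hab, ?_⟩
  rcases ha.eq_or_lt with rfl | ha
  · have hb : 0 < b := hb.lt_of_ne (by rintro rfl; simp at hab)
    simpa [norm_smul, hp1, abs_of_pos hb, smul_smul, hb.ne'] using hpΩ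
  set N := ‖a • e + b • p‖
  have hN : 0 < N := norm_pos_iff.mpr hab
  have hS : 0 < sin (r / 2) := sin_pos_of_mem_Ioo ⟨half_pos hr.1, (half_lt_self hr.1).trans hr.2⟩
  suffices hseg : segment ℝ (s • N⁻¹ • (a • e + b • p)) (s • p) ⊆ Ω from
    hseg (left_mem_segment ℝ _ _)
  refine (convex_segment _ _).isPreconnected.subset_of_closure_inter_subset hΩo
    ⟨_, right_mem_segment ℝ _ _, hpΩ⟩ ?_
  rintro _ ⟨hycl, α, β, hα, hβ, hαβ, rfl⟩
  by_contra hyΩ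
  set y := α • s • N⁻¹ • (a • e + b • p) + β • s • p
  have hyfr : y ∈ frontier Ω := hΩo.frontier_eq ▸ ⟨hycl, hyΩ⟩
  obtain ⟨ν, hν⟩ := exists_isOuterNormal_of_mem_frontier hΩo hΩc hyfr
  have hys : ‖y‖ ≤ s := by
    have hball : ∀ x : E, ‖x‖ = 1 → s • x ∈ Metric.closedBall (0 : E) s := fun x hx => by
      rw [mem_closedBall_zero_iff, norm_smul, hx, mul_one, Real.norm_of_nonneg hs.le]
    simpa only [mem_closedBall_zero_iff] using convex_closedBall (0 : E) s
      (hball (N⁻¹ • (a • e + b • p)) (norm_smul_inv_norm hab)) (hball p hp1) hα hβ hαβ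
  have hα : 0 < α := hα.lt_of_ne <| by
    rintro rfl
    rw [zero_add] at hαβ
    exact hyΩ (by simpa [y, hαβ] using hpΩ)
  have hνy : ⟪ν, y⟫ ≤ sin (r / 2) / 8 * s := by
    rcases eq_or_ne y 0 with hy0 | hy0
    · rw [hy0, inner_zero_right]; positivity
    · exact (inner_le_Mfun hyfr hy0 hys hν).trans hM
  have hνe : ⟪ν, e⟫ ≤ -(sin (r / 2) / 4) :=
    inner_le_neg_of_forall_cap_inner_le he hν.1 hr fun ω hω hωe => by
      have := hν.2 _ (hcap ω hω hωe).2
      rw [inner_sub_right, real_inner_smul_right] at this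
      nlinarith
  have := hν.mul_le_inner h0 he hp1 hpΩ hνe (A := α * s * N⁻¹ * a)
    (B := α * s * N⁻¹ * b + β * s) (by positivity) (by positivity) (by simp only [y]; module) hys
  nlinarith

end

theorem star_shaped_spherical_slices_general {n : ℕ}
    (rstar : ℝ) (hr : rstar ∈ Ioo 0 (Real.pi / 2)) :
    ∃ c : ℝ, 0 < c ∧
      ∀ (Ω : Set (EuclideanSpace ℝ (Fin n))) (e : EuclideanSpace ℝ (Fin n)),
        IsOpen Ω → Bornology.IsBounded Ω → Convex ℝ Ω →
        (0 : EuclideanSpace ℝ (Fin n)) ∈ closure Ω →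
        CapHyp Ω e rstar →
        ∀ t ∈ Sset Ω c, ∀ s : ℝ, s ∈ Icc (t / 2) (2 * t) → s ∈ Ioo (0:ℝ) 1 →
          ∀ p ∈ Vslice Ω s, ∀ a b : ℝ, 0 ≤ a → 0 ≤ b → a • e + b • p ≠ 0 →
            ‖a • e + b • p‖⁻¹ • (a • e + b • p) ∈ Vslice Ω s := by
  have hrπ : rstar ∈ Ioo 0 π := ⟨hr.1, hr.2.trans (half_lt_self pi_pos)⟩
  have hS : 0 < sin (rstar / 2) :=
    sin_pos_of_mem_Ioo ⟨half_pos hrπ.1, (half_lt_self hrπ.1).trans hrπ.2⟩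
  refine ⟨sin (rstar / 2) / 8, by positivity, ?_⟩
  intro Ω e hΩo _ hΩc h0 ⟨he, hcap⟩ t ht s hs ⟨hs0, hs1⟩ p hp a b ha hb hab
  have hM : Mfun Ω 0 s ≤ sin (rstar / 2) / 8 * s :=
    ht.2 s ⟨by linarith [hs.1, ht.1.1], by linarith [hs.2, ht.1.1]⟩
  exact normalize_add_mem_Vslice hΩo hΩc h0 hrπ hs0 he
    (fun ω hω hωe => Vslice_subset_Vslice hΩo hΩc h0 hs0 hs1.le (hcap ω hω hωe)) hM hp ha hb hab

/-- Star-shapedness of spherical slices (Corollary 5.6, first part). -/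
theorem star_shaped_spherical_slices {n : ℕ} (hn : 2 ≤ n)
    (rstar : ℝ) (hr : rstar ∈ Ioo 0 (Real.pi / 2)) :
    ∃ c : ℝ, 0 < c ∧
      ∀ (Ω : Set (EuclideanSpace ℝ (Fin n))) (e : EuclideanSpace ℝ (Fin n)),
        IsOpen Ω → Bornology.IsBounded Ω → Convex ℝ Ω →
        (0 : EuclideanSpace ℝ (Fin n)) ∈ closure Ω →
        CapHyp Ω e rstar →
        ∀ t ∈ Sset Ω c, ∀ s : ℝ, s ∈ Icc (t / 2) (2 * t) → s ∈ Ioo (0:ℝ) 1 →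
          ∀ p ∈ Vslice Ω s, ∀ a b : ℝ, 0 ≤ a → 0 ≤ b → a • e + b • p ≠ 0 →
            ‖a • e + b • p‖⁻¹ • (a • e + b • p) ∈ Vslice Ω s :=
  star_shaped_spherical_slices_general rstar hr
end
end

section
/- Smallness of the exceptional set of scales (Lemma 3.9): Let n ≥ 2, let Ω ⊆ ℝⁿ be a nonempty open convex set with 0 ∈ closure(Ω), and let c > 0 and C* > 0. Assume the Dini condition ∫₀¹ M_x(t)/t² dt ≤ C* holds for every x ∈ ∂Ω with ‖x‖ ≤ 1. Then there exists a constant C, depending only on c and C*, such that ∫_{(0,1) \ S_c} t⁻¹ dt ≤ C. -/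
open Set
open scoped RealInnerProductSpace

noncomputable section

open MeasureTheory

open scoped ENNReal

/-!
Let `x` be a boundary point nearest to `0` and `d = ‖x‖`. Moving the base point from `0` to `x`
gives `M₀(u) ≤ M_x(u + d) + d`. Hence at a scale `u ≥ 4 d / c` with `M₀(u) > c u / 2` we get
`M_x(2 u) ≥ c u / 4`, and the Dini condition at `x` bounds the logarithmic measure of these
scales by `8 C* / c`; such scales below `4 d / c` lie in `[d, 4 d / c)`, of logarithmic measure
at most `4 / c`. An exceptional scale `t` has some `s ∈ [t / 4, 4 t]` with `M₀(s) > c s`, so by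
monotonicity of `M₀` the whole interval `[s, 2 s)` consists of scales with `M₀(u) > c u / 2`;
integrating against `dt / t` and exchanging the integrals bounds the logarithmic measure of the
exceptional scales by a multiple of that of these scales.
-/

section SupportFunction

variable {E : Type*} [NormedAddCommGroup E] [InnerProductSpace ℝ E] {Ω : Set E} {x y ν : E}
  {t : ℝ}

lemma IsOuterNormal.inner_le_norm (h : IsOuterNormal Ω y ν) (v : E) : ⟪ν, v⟫ ≤ ‖v‖ := by
  simpa [h.1] using real_inner_le_norm ν v

lemma IsOuterNormal.inner_sub_nonneg (h : IsOuterNormal Ω y ν) (hx : x ∈ closure Ω) :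
    0 ≤ ⟪ν, y - x⟫ := by
  have hΩ : Ω ⊆ {z | ⟪ν, z - y⟫ ≤ 0} := fun z hz => h.2 z hz
  have hxy : ⟪ν, x - y⟫ ≤ 0 := closure_minimal hΩ (isClosed_le (by fun_prop) continuous_const) hx
  rw [← neg_sub, inner_neg_right]
  linarith

lemma le_Mfun (hy : y ∈ frontier Ω) (hpos : 0 < ‖y - x‖) (hle : ‖y - x‖ ≤ t)
    (hν : IsOuterNormal Ω y ν) : ⟪ν, y - x⟫ ≤ Mfun Ω x t := by
  refine le_csSup ⟨t, ?_⟩ ⟨y, ν, hy, hpos, hle, hν, rfl⟩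
  rintro _ ⟨y, ν, -, -, hle, hν, rfl⟩
  exact (hν.inner_le_norm _).trans hle

lemma Mfun_le {b : ℝ} (hb : 0 ≤ b)
    (h : ∀ y ν, y ∈ frontier Ω → 0 < ‖y - x‖ → ‖y - x‖ ≤ t → IsOuterNormal Ω y ν →
      ⟪ν, y - x⟫ ≤ b) :
    Mfun Ω x t ≤ b := by
  refine Real.sSup_le ?_ hb
  rintro _ ⟨y, ν, hy, hpos, hle, hν, rfl⟩
  exact h y ν hy hpos hle hν

lemma exists_mem_frontier_of_Mfun_pos (h : 0 < Mfun Ω x t) :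
    ∃ y ∈ frontier Ω, ‖y - x‖ ≤ t := by
  by_contra! hfar
  exact h.not_ge (Mfun_le le_rfl fun y _ hy _ hle _ => absurd hle (hfar y hy).not_ge)

lemma Mfun_nonneg (hx : x ∈ closure Ω) : 0 ≤ Mfun Ω x t := by
  refine Real.sSup_nonneg ?_
  rintro _ ⟨y, ν, -, -, -, hν, rfl⟩
  exact hν.inner_sub_nonneg hx

lemma Mfun_mono (hx : x ∈ closure Ω) : Monotone (Mfun Ω x) := fun _ _ hst =>
  Mfun_le (Mfun_nonneg hx) fun _ _ hy hpos hle hν => le_Mfun hy hpos (hle.trans hst) hν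

lemma Mfun_le_Mfun_add_norm_sub (hx : x ∈ closure Ω) (x₀ : E) (t : ℝ) :
    Mfun Ω x₀ t ≤ Mfun Ω x (t + ‖x - x₀‖) + ‖x - x₀‖ := by
  refine Mfun_le (add_nonneg (Mfun_nonneg hx) (norm_nonneg _)) fun y ν hy _ hle hν => ?_
  have hsplit : ⟪ν, y - x₀⟫ = ⟪ν, y - x⟫ + ⟪ν, x - x₀⟫ := by
    rw [← inner_add_right, sub_add_sub_cancel]
  have hbase : ⟪ν, x - x₀⟫ ≤ ‖x - x₀‖ := hν.inner_le_norm _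
  have hnear : ⟪ν, y - x⟫ ≤ Mfun Ω x (t + ‖x - x₀‖) := by
    rcases eq_or_ne y x with rfl | hyx
    · simpa using Mfun_nonneg hx
    refine le_Mfun hy (norm_pos_iff.2 (sub_ne_zero.2 hyx)) ?_ hν
    calc ‖y - x‖ = ‖(y - x₀) - (x - x₀)‖ := by rw [sub_sub_sub_cancel_right]
      _ ≤ ‖y - x₀‖ + ‖x - x₀‖ := norm_sub_le _ _
      _ ≤ t + ‖x - x₀‖ := by gcongr
  linarith

end SupportFunction

section LogarithmicMeasure

lemma setLIntegral_Ico_inv_le {a : ℝ} (ha : 0 < a) (b : ℝ) :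
    ∫⁻ u in Ico a b, ENNReal.ofReal u⁻¹ ≤ ENNReal.ofReal (b / a) :=
  calc ∫⁻ u in Ico a b, ENNReal.ofReal u⁻¹
      ≤ ∫⁻ _ in Ico a b, ENNReal.ofReal a⁻¹ :=
        setLIntegral_mono' measurableSet_Ico fun u hu =>
          ENNReal.ofReal_le_ofReal (inv_anti₀ ha hu.1)
    _ = ENNReal.ofReal (a⁻¹ * (b - a)) := by
        rw [setLIntegral_const, Real.volume_Ico, ENNReal.ofReal_mul (inv_nonneg.2 ha.le)]
    _ ≤ ENNReal.ofReal (b / a) := by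
        refine ENNReal.ofReal_le_ofReal ?_
        rw [mul_sub, inv_mul_cancel₀ ha.ne', inv_mul_eq_div]
        linarith

lemma ofReal_half_le_setLIntegral_Ico_inv {s : ℝ} (hs : 0 < s) :
    ENNReal.ofReal (1 / 2) ≤ ∫⁻ u in Ico s (2 * s), ENNReal.ofReal u⁻¹ :=
  calc ENNReal.ofReal (1 / 2) = ∫⁻ _ in Ico s (2 * s), ENNReal.ofReal (2 * s)⁻¹ := by
        rw [setLIntegral_const, Real.volume_Ico, ← ENNReal.ofReal_mul (by positivity)]
        congr 1
        field_simp
        ring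
    _ ≤ ∫⁻ u in Ico s (2 * s), ENNReal.ofReal u⁻¹ :=
        setLIntegral_mono' measurableSet_Ico fun u hu =>
          ENNReal.ofReal_le_ofReal (inv_anti₀ (hs.trans_le hu.1) hu.2.le)

lemma Real.lintegral_comp_mul_left (f : ℝ → ℝ≥0∞) {a : ℝ} (ha : a ≠ 0) :
    ∫⁻ u, f (a * u) = ENNReal.ofReal |a⁻¹| * ∫⁻ v, f v := by
  rw [← smul_eq_mul, ← lintegral_smul_measure, ← Real.map_volume_mul_left ha]
  exact (lintegral_map_equiv f (Homeomorph.mulLeft₀ a ha).toMeasurableEquiv).symm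

lemma setLIntegral_Ico_div_mul_inv_le {a : ℝ} (ha : 0 < a) (u : ℝ) :
    ∫⁻ t in Ico (u / a) (a * u), ENNReal.ofReal t⁻¹ ≤ ENNReal.ofReal (a ^ 2) := by
  rcases le_or_gt u 0 with hu | hu
  · refine le_of_eq_of_le (setLIntegral_eq_zero measurableSet_Ico fun t ht => ?_) zero_le
    have ht0 : t ≤ 0 := (ht.2.trans_le (mul_nonpos_of_nonneg_of_nonpos ha.le hu)).le
    exact ENNReal.ofReal_of_nonpos (inv_nonpos.2 ht0)
  · refine (setLIntegral_Ico_inv_le (by positivity) _).trans_eq ?_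
    congr 1
    field_simp

/-- Tonelli: integrate the window condition against `dt / t` and swap the integrals; each `u`
lies only in the windows of `t ∈ [u / a, a u)`, a set of logarithmic measure at most `a ^ 2`. -/
lemma setLIntegral_inv_le_of_le_setLIntegral_Ioc {g : ℝ → ℝ≥0∞} (hg : Measurable g)
    {S : Set ℝ} {a δ : ℝ} (ha : 0 < a) (hδ : 0 < δ)
    (hS : ∀ t ∈ S, ENNReal.ofReal δ ≤ ∫⁻ u in Ioc (t / a) (a * t), g u) :
    ∫⁻ t in S, ENNReal.ofReal t⁻¹ ≤ ENNReal.ofReal (a ^ 2 / δ) * ∫⁻ u, g u := by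
  set W : Set (ℝ × ℝ) := {p | p.1 / a < p.2 ∧ p.2 ≤ a * p.1}
  set F : ℝ × ℝ → ℝ≥0∞ := W.indicator fun p => g p.2 * ENNReal.ofReal p.1⁻¹
  have hW : MeasurableSet W :=
    (measurableSet_lt (f := fun p : ℝ × ℝ => p.1 / a) (by fun_prop) measurable_snd).inter
      (measurableSet_le (g := fun p : ℝ × ℝ => a * p.1) measurable_snd (by fun_prop))
  have hF : Measurable F := ((hg.comp measurable_snd).mul (by fun_prop)).indicator hW
  have hrow : ∀ t ∈ S, ENNReal.ofReal δ * ENNReal.ofReal t⁻¹ ≤ ∫⁻ u, F (t, u) := by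
    intro t ht
    have hslice : ∫⁻ u, F (t, u) = (∫⁻ u in Ioc (t / a) (a * t), g u) * ENNReal.ofReal t⁻¹ := by
      rw [← lintegral_mul_const _ hg, ← lintegral_indicator measurableSet_Ioc]
      rfl
    rw [hslice]
    gcongr
    exact hS t ht
  have hcol : ∀ u, ∫⁻ t, F (t, u) ≤ ENNReal.ofReal (a ^ 2) * g u := by
    intro u
    have hslice : ∀ t, F (t, u) ≤
        (Ico (u / a) (a * u)).indicator (fun t => ENNReal.ofReal t⁻¹ * g u) t := by
      intro t
      change W.indicator _ (t, u) ≤ _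
      by_cases htu : (t, u) ∈ W
      · have hmem : t ∈ Ico (u / a) (a * u) :=
          ⟨(div_le_iff₀ ha).2 (by linarith [htu.2]), (div_lt_iff₀' ha).1 htu.1⟩
        rw [indicator_of_mem htu, indicator_of_mem hmem, mul_comm]
      · rw [indicator_of_notMem htu]
        exact zero_le
    calc ∫⁻ t, F (t, u)
        ≤ ∫⁻ t in Ico (u / a) (a * u), ENNReal.ofReal t⁻¹ * g u := by
          rw [← lintegral_indicator measurableSet_Ico]
          exact lintegral_mono hslice
      _ ≤ ENNReal.ofReal (a ^ 2) * g u := by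
          rw [lintegral_mul_const _ (by fun_prop)]
          gcongr
          exact setLIntegral_Ico_div_mul_inv_le ha u
  calc ∫⁻ t in S, ENNReal.ofReal t⁻¹
      = ENNReal.ofReal δ⁻¹ * ∫⁻ t in S, ENNReal.ofReal δ * ENNReal.ofReal t⁻¹ := by
        rw [lintegral_const_mul' _ _ ENNReal.ofReal_ne_top, ← mul_assoc,
          ← ENNReal.ofReal_mul (inv_nonneg.2 hδ.le), inv_mul_cancel₀ hδ.ne', ENNReal.ofReal_one,
          one_mul]
    _ ≤ ENNReal.ofReal δ⁻¹ * ∫⁻ t, ∫⁻ u, F (t, u) := by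
        gcongr ENNReal.ofReal δ⁻¹ * ?_
        exact (setLIntegral_mono hF.lintegral_prod_right' hrow).trans (setLIntegral_le_lintegral _ _)
    _ = ENNReal.ofReal δ⁻¹ * ∫⁻ u, ∫⁻ t, F (t, u) := by
        rw [lintegral_lintegral_swap (f := fun t u => F (t, u)) hF.aemeasurable]
    _ ≤ ENNReal.ofReal δ⁻¹ * ∫⁻ u, ENNReal.ofReal (a ^ 2) * g u := by
        gcongr with u
        exact hcol u
    _ = ENNReal.ofReal (a ^ 2 / δ) * ∫⁻ u, g u := by
        rw [lintegral_const_mul _ hg, ← mul_assoc, ← ENNReal.ofReal_mul (inv_nonneg.2 hδ.le),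
          inv_mul_eq_div]

lemma setLIntegral_Ioo_diff_le_add (T : Set ℝ) :
    ∫⁻ t in Ioo 0 1 \ T, ENNReal.ofReal t⁻¹ ≤
      (∫⁻ t in Ioo 0 (1 / 16) \ T, ENNReal.ofReal t⁻¹) + ENNReal.ofReal 16 := by
  have hsplit : Ioo 0 1 \ T ⊆ (Ioo 0 (1 / 16) \ T) ∪ Ico (1 / 16) 1 := by
    rintro t ⟨ht, hT⟩
    rcases lt_or_ge t (1 / 16) with h | h
    exacts [Or.inl ⟨⟨ht.1, h⟩, hT⟩, Or.inr ⟨h, ht.2⟩]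
  calc ∫⁻ t in Ioo 0 1 \ T, ENNReal.ofReal t⁻¹
      ≤ (∫⁻ t in Ioo 0 (1 / 16) \ T, ENNReal.ofReal t⁻¹) +
          ∫⁻ t in Ico (1 / 16) 1, ENNReal.ofReal t⁻¹ :=
        (lintegral_mono_set hsplit).trans (lintegral_union_le _ _ _)
    _ ≤ (∫⁻ t in Ioo 0 (1 / 16) \ T, ENNReal.ofReal t⁻¹) + ENNReal.ofReal 16 := by
        gcongr
        exact (setLIntegral_Ico_inv_le (by norm_num) 1).trans_eq (by norm_num)

end LogarithmicMeasure

lemma IsClosed.exists_mem_forall_norm_le {E : Type*} [NormedAddCommGroup E] [ProperSpace E]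
    {s : Set E} (hs : IsClosed s) (hne : s.Nonempty) : ∃ x ∈ s, ∀ y ∈ s, ‖x‖ ≤ ‖y‖ := by
  obtain ⟨x, hx, hdist⟩ := hs.exists_infDist_eq_dist hne 0
  refine ⟨x, hx, fun y hy => ?_⟩
  have hxy := Metric.infDist_le_dist_of_mem (x := 0) hy
  rwa [hdist, dist_zero_left, dist_zero_left] at hxy

section ExceptionalScales

variable {E : Type*} [NormedAddCommGroup E] [InnerProductSpace ℝ E] {Ω : Set E} {x : E}
  {c Cstar u : ℝ}

def largeMScales (Ω : Set E) (c : ℝ) : Set ℝ :=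
  {u | u ∈ Ioo 0 (1 / 2) ∧ c * u / 2 < Mfun Ω 0 u}

lemma measurableSet_largeMScales (h0 : (0 : E) ∈ closure Ω) (c : ℝ) :
    MeasurableSet (largeMScales Ω c) :=
  measurableSet_Ioo.inter (measurableSet_lt (by fun_prop) (Mfun_mono h0).measurable)

lemma Mfun_pos_of_mem_largeMScales (hc : 0 < c) (hu : u ∈ largeMScales Ω c) :
    0 < Mfun Ω 0 u :=
  lt_trans (by have := hu.1.1; positivity) hu.2

lemma norm_le_of_mem_largeMScales (hc : 0 < c) (hx : ∀ y ∈ frontier Ω, ‖x‖ ≤ ‖y‖)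
    (hu : u ∈ largeMScales Ω c) : ‖x‖ ≤ u := by
  obtain ⟨y, hy, hyu⟩ := exists_mem_frontier_of_Mfun_pos (Mfun_pos_of_mem_largeMScales hc hu)
  rw [sub_zero] at hyu
  exact (hx y hy).trans hyu

lemma setLIntegral_largeMScales_inter_Iio_le (hc : 0 < c)
    (hx : ∀ y ∈ frontier Ω, ‖x‖ ≤ ‖y‖) :
    ∫⁻ u in largeMScales Ω c ∩ Iio (4 / c * ‖x‖), ENNReal.ofReal u⁻¹ ≤
      ENNReal.ofReal (4 / c) := by
  have hsub : largeMScales Ω c ∩ Iio (4 / c * ‖x‖) ⊆ Ico ‖x‖ (4 / c * ‖x‖) :=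
    fun u hu => ⟨norm_le_of_mem_largeMScales hc hx hu.1, hu.2⟩
  rcases (norm_nonneg x).eq_or_lt with hx0 | hx0
  · have hempty : largeMScales Ω c ∩ Iio (4 / c * ‖x‖) = ∅ :=
      subset_empty_iff.1 (hsub.trans (by rw [← hx0, mul_zero, Ico_self]))
    simp [hempty]
  calc ∫⁻ u in largeMScales Ω c ∩ Iio (4 / c * ‖x‖), ENNReal.ofReal u⁻¹
      ≤ ∫⁻ u in Ico ‖x‖ (4 / c * ‖x‖), ENNReal.ofReal u⁻¹ := lintegral_mono_set hsub
    _ ≤ ENNReal.ofReal (4 / c) :=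
        (setLIntegral_Ico_inv_le hx0 _).trans_eq (by rw [mul_div_cancel_right₀ _ hx0.ne'])

lemma setLIntegral_largeMScales_inter_Ici_le (hc : 0 < c) (hxΩ : x ∈ closure Ω)
    (hx : ∀ y ∈ frontier Ω, ‖x‖ ≤ ‖y‖)
    (hDini : ∫⁻ t in Ioo (0 : ℝ) 1, ENNReal.ofReal (Mfun Ω x t / t ^ 2) ≤ ENNReal.ofReal Cstar) :
    ∫⁻ u in largeMScales Ω c ∩ Ici (4 / c * ‖x‖), ENNReal.ofReal u⁻¹ ≤
      ENNReal.ofReal (8 * Cstar / c) := by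
  set φ := (Ioo (0 : ℝ) 1).indicator fun v => ENNReal.ofReal (Mfun Ω x v / v ^ 2)
  have hφ : Measurable φ :=
    ((Mfun_mono hxΩ).measurable.div (by fun_prop)).ennreal_ofReal.indicator measurableSet_Ioo
  have hpt : ∀ u ∈ largeMScales Ω c ∩ Ici (4 / c * ‖x‖),
      ENNReal.ofReal u⁻¹ ≤ ENNReal.ofReal (16 / c) * φ (2 * u) := by
    rintro u ⟨hu, hux⟩
    have hu0 : 0 < u := hu.1.1
    have hxc : ‖x‖ ≤ c * u / 4 := by
      rw [mem_Ici, div_mul_eq_mul_div, div_le_iff₀ hc] at hux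
      linarith
    have hMx : c * u / 4 ≤ Mfun Ω x (2 * u) := by
      have hshift := Mfun_le_Mfun_add_norm_sub hxΩ 0 u
      have hmono := Mfun_mono hxΩ
        (show u + ‖x‖ ≤ 2 * u by linarith [norm_le_of_mem_largeMScales hc hx hu])
      rw [sub_zero] at hshift
      linarith [hu.2]
    have h2u : 2 * u ∈ Ioo (0 : ℝ) 1 := ⟨by positivity, by linarith [hu.1.2]⟩
    rw [show φ (2 * u) = _ from indicator_of_mem h2u _, ← ENNReal.ofReal_mul (by positivity)]
    refine ENNReal.ofReal_le_ofReal ?_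
    calc u⁻¹ = 16 / c * (c * u / 4 / (2 * u) ^ 2) := by field_simp; ring
      _ ≤ 16 / c * (Mfun Ω x (2 * u) / (2 * u) ^ 2) := by gcongr
  calc ∫⁻ u in largeMScales Ω c ∩ Ici (4 / c * ‖x‖), ENNReal.ofReal u⁻¹
      ≤ ∫⁻ u, ENNReal.ofReal (16 / c) * φ (2 * u) :=
        (setLIntegral_mono (by fun_prop) hpt).trans (setLIntegral_le_lintegral _ _)
    _ = ENNReal.ofReal (16 / c) * (ENNReal.ofReal |2⁻¹| * ∫⁻ v, φ v) := by
        rw [lintegral_const_mul' _ _ ENNReal.ofReal_ne_top,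
          Real.lintegral_comp_mul_left φ two_ne_zero]
    _ ≤ ENNReal.ofReal (16 / c) * (ENNReal.ofReal |2⁻¹| * ENNReal.ofReal Cstar) := by
        rw [lintegral_indicator measurableSet_Ioo]
        gcongr
    _ = ENNReal.ofReal (8 * Cstar / c) := by
        rw [← ENNReal.ofReal_mul (abs_nonneg _), ← ENNReal.ofReal_mul (by positivity)]
        congr 1
        rw [abs_of_pos (by norm_num)]
        field_simp
        ring

lemma setLIntegral_largeMScales_le [ProperSpace E] (hc : 0 < c)
    (hDini : ∀ x ∈ frontier Ω, ‖x‖ ≤ 1 →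
      ∫⁻ t in Ioo (0 : ℝ) 1, ENNReal.ofReal (Mfun Ω x t / t ^ 2) ≤ ENNReal.ofReal Cstar) :
    ∫⁻ u in largeMScales Ω c, ENNReal.ofReal u⁻¹ ≤
      ENNReal.ofReal (4 / c) + ENNReal.ofReal (8 * Cstar / c) := by
  rcases (largeMScales Ω c).eq_empty_or_nonempty with hA | ⟨u₀, hu₀⟩
  · simp [hA]
  obtain ⟨y, hy, -⟩ := exists_mem_frontier_of_Mfun_pos (Mfun_pos_of_mem_largeMScales hc hu₀)
  obtain ⟨x, hxF, hx⟩ := isClosed_frontier.exists_mem_forall_norm_le ⟨y, hy⟩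
  have hx1 : ‖x‖ ≤ 1 := (norm_le_of_mem_largeMScales hc hx hu₀).trans (by linarith [hu₀.1.2])
  calc ∫⁻ u in largeMScales Ω c, ENNReal.ofReal u⁻¹
      = ∫⁻ u in largeMScales Ω c ∩ Iio (4 / c * ‖x‖) ∪ largeMScales Ω c ∩ Ici (4 / c * ‖x‖),
          ENNReal.ofReal u⁻¹ := by
        rw [← inter_union_distrib_left, Iio_union_Ici, inter_univ]
    _ ≤ _ := (lintegral_union_le _ _ _).trans (add_le_add
        (setLIntegral_largeMScales_inter_Iio_le hc hx)
        (setLIntegral_largeMScales_inter_Ici_le hc (frontier_subset_closure hxF) hx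
          (hDini x hxF hx1)))

lemma ofReal_half_le_setLIntegral_Ioc_largeMScales (hc : 0 < c) (h0 : (0 : E) ∈ closure Ω)
    {t : ℝ} (ht : t ∈ Ioo (0 : ℝ) (1 / 16) \ Sset Ω c) :
    ENNReal.ofReal (1 / 2) ≤
      ∫⁻ u in Ioc (t / 8) (8 * t), (largeMScales Ω c).indicator (fun u => ENNReal.ofReal u⁻¹) u := by
  obtain ⟨s, hs, hMs⟩ : ∃ s ∈ Icc (t / 4) (4 * t), c * s < Mfun Ω 0 s := by
    by_contra! h
    exact ht.2 ⟨⟨ht.1.1, by linarith [ht.1.2]⟩, h⟩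
  have hs0 : 0 < s := by linarith [hs.1, ht.1.1]
  have hA : Ico s (2 * s) ⊆ largeMScales Ω c := fun u hu =>
    ⟨⟨hs0.trans_le hu.1, by linarith [hu.2, hs.2, ht.1.2]⟩,
      calc c * u / 2 < c * s := by nlinarith [hu.2]
        _ < Mfun Ω 0 s := hMs
        _ ≤ Mfun Ω 0 u := Mfun_mono h0 hu.1⟩
  calc ENNReal.ofReal (1 / 2) ≤ ∫⁻ u in Ico s (2 * s), ENNReal.ofReal u⁻¹ :=
        ofReal_half_le_setLIntegral_Ico_inv hs0
    _ = ∫⁻ u in Ico s (2 * s), (largeMScales Ω c).indicator (fun u => ENNReal.ofReal u⁻¹) u :=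
        setLIntegral_congr_fun measurableSet_Ico fun u hu => (indicator_of_mem (hA hu) (fun u => ENNReal.ofReal u⁻¹)).symm
    _ ≤ _ := lintegral_mono_set fun u hu =>
        show u ∈ Ioc (t / 8) (8 * t) from ⟨by linarith [hu.1, hs.1], by linarith [hu.2, hs.2]⟩

end ExceptionalScales

theorem exceptional_scales_small_general {n : ℕ} (c Cstar : ℝ)
    (hc : 0 < c) (hCstar : 0 < Cstar) :
    ∃ C : ℝ, ∀ Ω : Set (EuclideanSpace ℝ (Fin n)),
      IsOpen Ω → Convex ℝ Ω → Ω.Nonempty →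
      (0 : EuclideanSpace ℝ (Fin n)) ∈ closure Ω →
      (∀ x ∈ frontier Ω, ‖x‖ ≤ 1 →
        ∫⁻ t in Ioo (0:ℝ) 1, ENNReal.ofReal (Mfun Ω x t / t ^ 2) ≤ ENNReal.ofReal Cstar) →
      ∫⁻ t in Ioo (0:ℝ) 1 \ Sset Ω c, ENNReal.ofReal t⁻¹ ≤ ENNReal.ofReal C := by
  refine ⟨16 + 128 * (4 / c + 8 * Cstar / c), fun Ω _ _ _ h0 hDini => ?_⟩
  set g := (largeMScales Ω c).indicator fun u => ENNReal.ofReal u⁻¹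
  have hlow : ∫⁻ t in Ioo 0 (1 / 16) \ Sset Ω c, ENNReal.ofReal t⁻¹ ≤
      ENNReal.ofReal 128 * ∫⁻ u, g u :=
    (setLIntegral_inv_le_of_le_setLIntegral_Ioc (a := 8)
      (measurable_inv.ennreal_ofReal.indicator (measurableSet_largeMScales h0 c))
      (by norm_num) (by norm_num) fun t ht =>
        ofReal_half_le_setLIntegral_Ioc_largeMScales hc h0 ht).trans_eq
      (by rw [show (8 : ℝ) ^ 2 / (1 / 2) = 128 by norm_num])
  have hg : ∫⁻ u, g u ≤ ENNReal.ofReal (4 / c) + ENNReal.ofReal (8 * Cstar / c) := by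
    rw [lintegral_indicator (measurableSet_largeMScales h0 c)]
    exact setLIntegral_largeMScales_le hc hDini
  calc ∫⁻ t in Ioo 0 1 \ Sset Ω c, ENNReal.ofReal t⁻¹
      ≤ (∫⁻ t in Ioo 0 (1 / 16) \ Sset Ω c, ENNReal.ofReal t⁻¹) + ENNReal.ofReal 16 :=
        setLIntegral_Ioo_diff_le_add _
    _ ≤ ENNReal.ofReal 128 * (ENNReal.ofReal (4 / c) + ENNReal.ofReal (8 * Cstar / c)) +
          ENNReal.ofReal 16 := by
        gcongr
        exact hlow.trans (by gcongr)
    _ = ENNReal.ofReal (16 + 128 * (4 / c + 8 * Cstar / c)) := by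
        rw [← ENNReal.ofReal_add (by positivity) (by positivity),
          ← ENNReal.ofReal_mul (by norm_num), ← ENNReal.ofReal_add (by positivity) (by norm_num),
          add_comm]

/-- Smallness of the exceptional set of scales (Lemma 3.9). -/
theorem exceptional_scales_small {n : ℕ} (hn : 2 ≤ n) (c Cstar : ℝ)
    (hc : 0 < c) (hCstar : 0 < Cstar) :
    ∃ C : ℝ, ∀ Ω : Set (EuclideanSpace ℝ (Fin n)),
      IsOpen Ω → Convex ℝ Ω → Ω.Nonempty →
      (0 : EuclideanSpace ℝ (Fin n)) ∈ closure Ω →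
      (∀ x ∈ frontier Ω, ‖x‖ ≤ 1 →
        ∫⁻ t in Ioo (0:ℝ) 1, ENNReal.ofReal (Mfun Ω x t / t ^ 2) ≤ ENNReal.ofReal Cstar) →
      ∫⁻ t in Ioo (0:ℝ) 1 \ Sset Ω c, ENNReal.ofReal t⁻¹ ≤ ENNReal.ofReal C :=
  exceptional_scales_small_general c Cstar hc hCstar
end
end
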